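/- The function ψ(t) = (1/2)(1−√t)² log((1−√t)²) + (1/2)(1+√t)² log((1+√t)²) − (1+t) log(1+t) is strictly increasing and concave on [0,1], with ψ(0) = 0 and ψ(1) = 2 log 2 (so ψ maps [0,1] onto [0, 2 log 2]). -/

import Mathlib

/-- `ψ(t) = (1/2)(1−√t)² log((1−√t)²) + (1/2)(1+√t)² log((1+√t)²) − (1+t) log(1+t)`
(note `Real.log 0 = 0`). -/
noncomputable def psi (t : ℝ) : ℝ :=
  (1 / 2) * (1 - Real.sqrt t) ^ 2 * Real.log ((1 - Real.sqrt t) ^ 2) +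
    (1 / 2) * (1 + Real.sqrt t) ^ 2 * Real.log ((1 + Real.sqrt t) ^ 2) -
    (1 + t) * Real.log (1 + t)

/-!
Put `s = √t`. Writing `ψ` through `negMulLog x = -x log x`, the chain rule gives
`ψ'(t) = φ(s) / s` with `φ(s) = (1 + s) log (1 + s) - (1 - s) log (1 - s) - s log (1 + s²)`.
Since `φ(0) = 0` and `φ'(s) = log (1 - s²) - log (1 + s²) + 2 / (1 + s²)` decreases on `[0, 1)`,
`φ` is concave there, so its slope `φ(s) / s` from the origin decreases; hence `ψ'` decreases
and `ψ` is concave. Finally `φ > 0` on `(0, 1)` because `s log (1 + s²) ≤ (1 + s) log (1 + s)`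
and `(1 - s) log (1 - s) < 0`, so `ψ' > 0`.
-/

open Real Set

theorem ConcaveOn.antitoneOn_div_self {𝕜 : Type*} [Field 𝕜] [LinearOrder 𝕜]
    [IsStrictOrderedRing 𝕜] {s : Set 𝕜} {f : 𝕜 → 𝕜} (hf : ConcaveOn 𝕜 s f) (h0 : (0 : 𝕜) ∈ s)
    (hf0 : f 0 = 0) : AntitoneOn (fun x => f x / x) (s \ {0}) := by
  intro x hx y hy hxy
  have := hf.neg.secant_mono h0 hx.1 hy.1 hx.2 hy.2 hxy
  simp only [Pi.neg_apply, hf0, neg_zero, sub_zero, neg_div] at this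
  exact neg_le_neg_iff.mp this

theorem AntitoneOn.concaveOn_of_hasDerivAt {D : Set ℝ} {f f' : ℝ → ℝ} (hD : Convex ℝ D)
    (hf : ContinuousOn f D) (hf' : ∀ x ∈ interior D, HasDerivAt f (f' x) x)
    (h_anti : AntitoneOn f' (interior D)) : ConcaveOn ℝ D f :=
  AntitoneOn.concaveOn_of_deriv hD hf
    (fun x hx => (hf' x hx).differentiableAt.differentiableWithinAt) fun x hx y hy hxy => by
      rw [(hf' x hx).deriv, (hf' y hy).deriv]
      exact h_anti hx hy hxy

lemma sqrt_mem_Ioo_zero_one {t : ℝ} (ht : t ∈ Ioo 0 1) : √t ∈ Ioo 0 1 :=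
  ⟨sqrt_pos.2 ht.1, (sqrt_lt' one_pos).2 (by simpa using ht.2)⟩

noncomputable def phi (s : ℝ) : ℝ :=
  (1 + s) * log (1 + s) - (1 - s) * log (1 - s) - s * log (1 + s ^ 2)

lemma hasDerivAt_phi {s : ℝ} (hs₁ : s ≠ -1) (hs₂ : s ≠ 1) :
    HasDerivAt phi (log (1 - s ^ 2) - log (1 + s ^ 2) + 2 / (1 + s ^ 2)) s := by
  have hp : 1 + s ≠ 0 := fun h => hs₁ (by linarith)
  have hm : 1 - s ≠ 0 := fun h => hs₂ (by linarith)
  have hq : 1 + s ^ 2 ≠ 0 := by positivity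
  have dp := (hasDerivAt_mul_log hp).comp s ((hasDerivAt_id s).const_add 1)
  have dm := (hasDerivAt_mul_log hm).comp s ((hasDerivAt_id s).const_sub 1)
  have dq := (hasDerivAt_id s).mul (((hasDerivAt_pow 2 s).const_add 1).log hq)
  refine HasDerivAt.congr_deriv (f := phi) ((dp.sub dm).sub dq) ?_
  rw [show 1 - s ^ 2 = (1 + s) * (1 - s) by ring, log_mul hp hm]
  simp only [id]
  field_simp
  ring

lemma antitoneOn_deriv_phi :
    AntitoneOn (fun s => log (1 - s ^ 2) - log (1 + s ^ 2) + 2 / (1 + s ^ 2)) (Ioo 0 1) := by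
  intro a ha b hb hab
  have : 0 < 1 - b ^ 2 := by nlinarith [hb.1, hb.2]
  have := pow_le_pow_left₀ ha.1.le hab 2
  dsimp only
  gcongr

lemma concaveOn_phi : ConcaveOn ℝ (Ico 0 1) phi := by
  have hderiv : ∀ s ∈ Ico (0 : ℝ) 1, HasDerivAt phi _ s := fun s hs =>
    hasDerivAt_phi (by linarith [hs.1]) hs.2.ne
  have hanti := antitoneOn_deriv_phi
  rw [← interior_Ico] at hanti
  exact hanti.concaveOn_of_hasDerivAt (convex_Ico 0 1)
    (fun s hs => (hderiv s hs).continuousAt.continuousWithinAt)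
    fun s hs => hderiv s (interior_subset hs)

lemma phi_pos {s : ℝ} (hs : s ∈ Ioo 0 1) : 0 < phi s := by
  obtain ⟨hs₀, hs₁⟩ := hs
  have h₁ : log (1 + s ^ 2) ≤ log (1 + s) := log_le_log (by positivity) (by nlinarith)
  have h₂ : 0 ≤ log (1 + s ^ 2) := log_nonneg (by nlinarith)
  have h₃ : log (1 - s) < 0 := log_neg (by linarith) (by linarith)
  unfold phi
  nlinarith

lemma antitoneOn_phi_div_self : AntitoneOn (fun s => phi s / s) (Ioo 0 1) :=
  (concaveOn_phi.antitoneOn_div_self (left_mem_Ico.2 one_pos) (by simp [phi])).mono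
    fun s hs => ⟨Ioo_subset_Ico_self hs, hs.1.ne'⟩

lemma psi_eq_negMulLog : psi = fun t => negMulLog (1 + t) -
    (negMulLog ((1 - √t) ^ 2) + negMulLog ((1 + √t) ^ 2)) / 2 := by
  funext t
  simp only [psi, negMulLog]
  ring

lemma continuous_psi : Continuous psi := by
  rw [psi_eq_negMulLog]
  fun_prop

lemma hasDerivAt_psi {t : ℝ} (ht₀ : 0 < t) (ht₁ : t ≠ 1) :
    HasDerivAt psi (phi √t / √t) t := by
  have hs₀ : √t ≠ 0 := (sqrt_pos.2 ht₀).ne'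
  have hst : √t ^ 2 = t := sq_sqrt ht₀.le
  have hm : 1 - √t ≠ 0 := fun h => ht₁ (by rw [← hst, ← sub_eq_zero.1 h, one_pow])
  have hp : 1 + √t ≠ 0 := by positivity
  have dsqrt := hasDerivAt_sqrt ht₀.ne'
  have dt := (hasDerivAt_negMulLog (by positivity : 1 + t ≠ 0)).comp t
    ((hasDerivAt_id t).const_add 1)
  have dm := (hasDerivAt_negMulLog (pow_ne_zero 2 hm)).comp t ((dsqrt.const_sub 1).pow 2)
  have dp := (hasDerivAt_negMulLog (pow_ne_zero 2 hp)).comp t ((dsqrt.const_add 1).pow 2)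
  rw [psi_eq_negMulLog]
  refine (dt.sub ((dm.add dp).div_const 2)).congr_deriv ?_
  rw [phi, log_pow, log_pow, hst]
  field_simp
  ring

lemma psi_one : psi 1 = 2 * log 2 := by
  have : log 4 = 2 * log 2 := by
    rw [show (4 : ℝ) = 2 ^ 2 by norm_num, log_pow, Nat.cast_ofNat]
  norm_num [psi, this]
  ring

/-- `ψ` is strictly increasing and concave on `[0,1]`, with `ψ(0) = 0` and
`ψ(1) = 2 log 2`. -/
theorem psi_strictMono_concave :
    StrictMonoOn psi (Set.Icc 0 1) ∧ ConcaveOn ℝ (Set.Icc 0 1) psi ∧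
      psi 0 = 0 ∧ psi 1 = 2 * Real.log 2 := by
  have hderiv : ∀ t ∈ interior (Icc (0 : ℝ) 1), HasDerivAt psi (phi √t / √t) t := by
    rw [interior_Icc]
    exact fun t ht => hasDerivAt_psi ht.1 ht.2.ne
  have hderiv_pos : ∀ t ∈ interior (Icc (0 : ℝ) 1), 0 < phi √t / √t := by
    rw [interior_Icc]
    intro t ht
    have hs := sqrt_mem_Ioo_zero_one ht
    exact div_pos (phi_pos hs) hs.1
  have hderiv_anti : AntitoneOn (fun t => phi √t / √t) (interior (Icc 0 1)) := by
    rw [interior_Icc]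
    exact fun x hx y hy hxy => antitoneOn_phi_div_self (sqrt_mem_Ioo_zero_one hx)
      (sqrt_mem_Ioo_zero_one hy) (sqrt_le_sqrt hxy)
  refine ⟨?_, ?_, by simp [psi], psi_one⟩
  · exact strictMonoOn_of_hasDerivWithinAt_pos (convex_Icc 0 1) continuous_psi.continuousOn
      (fun t ht => (hderiv t ht).hasDerivWithinAt) hderiv_pos
  · exact hderiv_anti.concaveOn_of_hasDerivAt (convex_Icc 0 1) continuous_psi.continuousOn hderiv
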